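/- Let ψ∈Nₙ and α,γ∈Pₙ be such that ⟨↓[ψ]α≠↓[ψ]α⟩∧¬⟨↓[ψ]γ≠↓[ψ]γ⟩ is XP-consistent and ¬⟨α≠α⟩ is a conjunct of ψ. Then ¬⟨α=γ⟩ is a conjunct of ψ. -/

import Mathlib

attribute [local instance] Classical.propDecidable

mutual
inductive PathExpr (A : Type) : Type
  | eps : PathExpr A
  | down : PathExpr A
  | test : NodeExpr A → PathExpr A
  | comp : PathExpr A → PathExpr A → PathExpr A
  | union : PathExpr A → PathExpr A → PathExpr A

inductive NodeExpr (A : Type) : Type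
  | lab : A → NodeExpr A
  | neg : NodeExpr A → NodeExpr A
  | conj : NodeExpr A → NodeExpr A → NodeExpr A
  | diam : PathExpr A → NodeExpr A
  | eqTest : PathExpr A → PathExpr A → NodeExpr A
  | neqTest : PathExpr A → PathExpr A → NodeExpr A
end

namespace XPath

variable {A : Type}

/-- Defined disjunction `φ ∨ ψ := ¬(¬φ ∧ ¬ψ)`. -/
def nOr (φ ψ : NodeExpr A) : NodeExpr A := .neg (.conj (.neg φ) (.neg ψ))

/-- `⊤ := ⟨ε⟩`. -/
def topN : NodeExpr A := .diam .eps

/-- `⊥ := ¬⊤`. -/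
def botN : NodeExpr A := .neg topN

/-- `⊥̄ := [¬⟨ε⟩]`. -/
def botP : PathExpr A := .test (.neg (.diam .eps))

def bigOr (l : List (NodeExpr A)) : NodeExpr A := l.foldr nOr botN

def bigUnion (l : List (PathExpr A)) : PathExpr A := l.foldr PathExpr.union botP

/-- A data tree: a tree (connected, acyclic, unique parents except the root)
whose nodes carry labels from `A`, together with a partition of the nodes
(presented as an equivalence relation `eqd`). -/
structure DataTree (A : Type) where
  X : Type
  child : X → X → Prop
  root : X
  label : X → A
  eqd : X → X → Prop
  eqd_equiv : Equivalence eqd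
  parent_unique : ∀ ⦃x y z : X⦄, child x z → child y z → x = y
  root_no_parent : ∀ x : X, ¬ child x root
  reach : ∀ x : X, Relation.ReflTransGen child root x
  acyclic : ∀ x : X, ¬ Relation.TransGen child x x

mutual
/-- Semantics of path expressions. -/
def psem (T : DataTree A) : PathExpr A → T.X → T.X → Prop
  | .eps, x, y => x = y
  | .down, x, y => T.child x y
  | .test φ, x, y => x = y ∧ nsem T φ x
  | .comp α β, x, z => ∃ y, psem T α x y ∧ psem T β y z
  | .union α β, x, y => psem T α x y ∨ psem T β x y

/-- Semantics of node expressions. -/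
def nsem (T : DataTree A) : NodeExpr A → T.X → Prop
  | .lab a, x => T.label x = a
  | .neg φ, x => ¬ nsem T φ x
  | .conj φ ψ, x => nsem T φ x ∧ nsem T ψ x
  | .diam α, x => ∃ y, psem T α x y
  | .eqTest α β, x => ∃ y z, psem T α x y ∧ psem T β x z ∧ T.eqd y z
  | .neqTest α β, x => ∃ y z, psem T α x y ∧ psem T β x z ∧ ¬ T.eqd y z
end

/-- Semantic equivalence of node expressions: same denotation in every data tree. -/
def nodeValid (φ ψ : NodeExpr A) : Prop :=
  ∀ (T : DataTree A) (x : T.X), nsem T φ x ↔ nsem T ψ x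

/-- Semantic equivalence of path expressions: same denotation in every data tree. -/
def pathValid (α β : PathExpr A) : Prop :=
  ∀ (T : DataTree A) (x y : T.X), psem T α x y ↔ psem T β x y

mutual
/-- Derivability of node equivalences in the axiomatic system `XP`. -/
inductive NDer {A : Type} [Fintype A] : NodeExpr A → NodeExpr A → Prop
  | refl (φ : NodeExpr A) : NDer φ φ
  | symm {φ ψ : NodeExpr A} : NDer φ ψ → NDer ψ φ
  | trans {φ ψ ρ : NodeExpr A} : NDer φ ψ → NDer ψ ρ → NDer φ ρ
  | congr_neg {φ ψ : NodeExpr A} : NDer φ ψ → NDer (.neg φ) (.neg ψ)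
  | congr_conj {φ φ' ψ ψ' : NodeExpr A} :
      NDer φ φ' → NDer ψ ψ' → NDer (.conj φ ψ) (.conj φ' ψ')
  | congr_diam {α β : PathExpr A} : PDer α β → NDer (.diam α) (.diam β)
  | congr_eqTest {α α' β β' : PathExpr A} :
      PDer α α' → PDer β β' → NDer (.eqTest α β) (.eqTest α' β')
  | congr_neqTest {α α' β β' : PathExpr A} :
      PDer α α' → PDer β β' → NDer (.neqTest α β) (.neqTest α' β')
  | lbAx1 : NDer topN (bigOr ((Finset.univ : Finset A).toList.map NodeExpr.lab))
  | lbAx2 {a b : A} : a ≠ b → NDer botN (.conj (.lab a) (.lab b))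
  | ndAx1 (φ ψ : NodeExpr A) :
      NDer φ (nOr (.neg (nOr (.neg φ) ψ)) (.neg (nOr (.neg φ) (.neg ψ))))
  | ndAx2 (φ : NodeExpr A) : NDer (.diam (.test φ)) φ
  | ndAx3 (α β : PathExpr A) : NDer (.diam (.union α β)) (nOr (.diam α) (.diam β))
  | ndAx4 (α β : PathExpr A) : NDer (.diam (.comp α β)) (.diam (.comp α (.test (.diam β))))
  | eqAx1 (α β : PathExpr A) : NDer (.eqTest α β) (.eqTest β α)
  | eqAx2 (α β γ : PathExpr A) :
      NDer (.eqTest (.union α β) γ) (nOr (.eqTest α γ) (.eqTest β γ))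
  | eqAx3 (φ : NodeExpr A) (α β : PathExpr A) :
      NDer (.conj φ (.eqTest α β)) (.eqTest (.comp (.test φ) α) β)
  | eqAx4 (α β : PathExpr A) : NDer (nOr (.eqTest α β) (.diam α)) (.diam α)
  | eqAx5 (γ α β : PathExpr A) :
      NDer (nOr (.diam (.comp γ (.test (.eqTest α β)))) (.eqTest (.comp γ α) (.comp γ β)))
        (.eqTest (.comp γ α) (.comp γ β))
  | eqAx6 (α : PathExpr A) : NDer (.eqTest α α) (.diam α)
  | eqAx7 (α β : PathExpr A) :
      NDer (nOr (.conj (.eqTest α .eps) (.eqTest β .eps)) (.eqTest α β)) (.eqTest α β)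
  | eqAx8 (α β γ : PathExpr A) :
      NDer (nOr (.eqTest α (.comp β (.test (.eqTest .eps γ)))) (.eqTest α (.comp β γ)))
        (.eqTest α (.comp β γ))
  | neqAx1 (α β : PathExpr A) : NDer (.neqTest α β) (.neqTest β α)
  | neqAx2 (α β γ : PathExpr A) :
      NDer (.neqTest (.union α β) γ) (nOr (.neqTest α γ) (.neqTest β γ))
  | neqAx3 (φ : NodeExpr A) (α β : PathExpr A) :
      NDer (.conj φ (.neqTest α β)) (.neqTest (.comp (.test φ) α) β)
  | neqAx4 (α β : PathExpr A) : NDer (nOr (.neqTest α β) (.diam α)) (.diam α)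
  | neqAx5 (γ α β : PathExpr A) :
      NDer (nOr (.diam (.comp γ (.test (.neqTest α β)))) (.neqTest (.comp γ α) (.comp γ β)))
        (.neqTest (.comp γ α) (.comp γ β))
  | neqAx6 (α β γ η : PathExpr A) :
      NDer (nOr (.conj (.eqTest α γ) (.eqTest β η)) (nOr (.eqTest α β) (.neqTest γ η)))
        (nOr (.eqTest α β) (.neqTest γ η))
  | neqAx7 (α β γ η : PathExpr A) :
      NDer (nOr (.conj (.neqTest α γ) (.eqTest β η)) (nOr (.neqTest α β) (.neqTest γ η)))
        (nOr (.neqTest α β) (.neqTest γ η))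
  | neqAx8 (α β γ η : PathExpr A) :
      NDer (nOr (.eqTest γ (.comp η (.comp (.test (.conj (.neg (.eqTest α β)) (.diam α))) β)))
              (.neqTest γ (.comp η α)))
        (.neqTest γ (.comp η α))
  | neqAx9 (α β γ η : PathExpr A) :
      NDer (nOr (.neqTest γ (.comp η (.comp (.test (.conj (.neg (.neqTest α β)) (.diam α))) β)))
              (.neqTest γ (.comp η α)))
        (.neqTest γ (.comp η α))
  | neqAx10 (α β γ η : PathExpr A) :
      NDer (nOr (.eqTest γ (.comp η (.comp (.test (.conj (.neg (.neqTest α α)) (.eqTest α β))) α)))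
              (.eqTest γ (.comp η β)))
        (.eqTest γ (.comp η β))

/-- Derivability of path equivalences in the axiomatic system `XP`. -/
inductive PDer {A : Type} [Fintype A] : PathExpr A → PathExpr A → Prop
  | refl (α : PathExpr A) : PDer α α
  | symm {α β : PathExpr A} : PDer α β → PDer β α
  | trans {α β γ : PathExpr A} : PDer α β → PDer β γ → PDer α γ
  | congr_test {φ ψ : NodeExpr A} : NDer φ ψ → PDer (.test φ) (.test ψ)
  | congr_comp {α α' β β' : PathExpr A} :
      PDer α α' → PDer β β' → PDer (.comp α β) (.comp α' β')
  | congr_union {α α' β β' : PathExpr A} :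
      PDer α α' → PDer β β' → PDer (.union α β) (.union α' β')
  | prAx1 (α β : PathExpr A) : PDer (.comp (.comp α (.test (.neg (.diam β)))) β) botP
  | prAx2 : PDer (.test topN) (.eps : PathExpr A)
  | prAx3 (φ ψ : NodeExpr A) : PDer (.test (nOr φ ψ)) (.union (.test φ) (.test ψ))
  | isAx1 (α β γ : PathExpr A) : PDer (.union (.union α β) γ) (.union α (.union β γ))
  | isAx2 (α β : PathExpr A) : PDer (.union α β) (.union β α)
  | isAx3 (α : PathExpr A) : PDer (.union α α) α
  | isAx4 (α β γ : PathExpr A) : PDer (.comp α (.comp β γ)) (.comp (.comp α β) γ)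
  | isAx5l (α : PathExpr A) : PDer (.comp .eps α) α
  | isAx5r (α : PathExpr A) : PDer (.comp α .eps) α
  | isAx6l (α β γ : PathExpr A) :
      PDer (.comp α (.union β γ)) (.union (.comp α β) (.comp α γ))
  | isAx6r (α β γ : PathExpr A) :
      PDer (.comp (.union α β) γ) (.union (.comp α γ) (.comp β γ))
  | isAx7 (α : PathExpr A) : PDer (.union botP α) α
end

/-- A node expression is `XP`-consistent if it is not provably equivalent to `⊥`. -/
def NConsistent [Fintype A] (φ : NodeExpr A) : Prop := ¬ NDer φ botN

/-- A path expression is `XP`-consistent if it is not provably equivalent to `⊥̄`. -/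
def PConsistent [Fintype A] (α : PathExpr A) : Prop := ¬ PDer α botP

/-- The normal form `a ∧ ⋀_{d ∈ C} d ∧ ⋀_{d ∈ D∖C} ¬d`, built along the canonical listing `D`. -/
noncomputable def mkNF (a : A) (C D : List (NodeExpr A)) : NodeExpr A :=
  D.foldl (fun acc d => .conj acc (if d ∈ C then d else .neg d)) (.lab a)

/-- The canonical lists of normal-form path expressions (first component)
and normal-form node expressions (second component) at each level. -/
noncomputable def NF (A : Type) [Fintype A] : ℕ → List (PathExpr A) × List (NodeExpr A)
  | 0 =>
    ([.eps],
      (Finset.univ : Finset A).toList.map fun a =>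
        NodeExpr.conj (.conj (.lab a) (.eqTest .eps .eps)) (.neg (.neqTest .eps .eps)))
  | n+1 =>
    let P := (NF A n).1
    let N := (NF A n).2
    let P' : List (PathExpr A) :=
      .eps :: N.flatMap fun ψ => P.map fun β => PathExpr.comp .down (.comp (.test ψ) β)
    let D : List (NodeExpr A) :=
      (P'.flatMap fun α => P'.map fun β => NodeExpr.eqTest α β) ++
      (P'.flatMap fun α => P'.map fun β => NodeExpr.neqTest α β)
    let cands : List (NodeExpr A) :=
      D.sublists.flatMap fun C => (Finset.univ : Finset A).toList.map fun a => mkNF a C D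
    (P', cands.filter fun φ => decide (NConsistent φ))

/-- `Pₙ`: normal-form path expressions of level `n`. -/
noncomputable def Pnf (A : Type) [Fintype A] (n : ℕ) : Set (PathExpr A) :=
  {α | α ∈ (NF A n).1}

/-- `Nₙ`: normal-form node expressions of level `n`. -/
noncomputable def Nnf (A : Type) [Fintype A] (n : ℕ) : Set (NodeExpr A) :=
  {φ | φ ∈ (NF A n).2}

/-- `Dₙ`: data-aware diamonds between normal-form paths of level `n`. -/
noncomputable def Dnf (A : Type) [Fintype A] (n : ℕ) : Set (NodeExpr A) :=
  {φ | ∃ α ∈ Pnf A n, ∃ β ∈ Pnf A n, φ = NodeExpr.eqTest α β ∨ φ = NodeExpr.neqTest α β}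

/-- The conjuncts of a node expression (flattening `∧`). -/
def conjuncts : NodeExpr A → List (NodeExpr A)
  | .conj φ ψ => conjuncts φ ++ conjuncts ψ
  | φ => [φ]

/-- `δ` is a conjunct of `ψ`. -/
def IsConjunct (δ ψ : NodeExpr A) : Prop := δ ∈ conjuncts ψ

/-- Length of a path expression. -/
def plen : PathExpr A → ℕ
  | .eps => 0
  | .down => 1
  | .test _ => 0
  | .comp α β => plen α + plen β
  | .union α β => max (plen α) (plen β)

mutual
/-- Downward depth of a node expression. -/
def ndd : NodeExpr A → ℕ
  | .lab _ => 0
  | .neg φ => ndd φ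
  | .conj φ ψ => max (ndd φ) (ndd ψ)
  | .diam α => pdd α
  | .eqTest α β => max (pdd α) (pdd β)
  | .neqTest α β => max (pdd α) (pdd β)

/-- Downward depth of a path expression. -/
def pdd : PathExpr A → ℕ
  | .eps => 0
  | .down => 1
  | .test φ => ndd φ
  | .comp α β => max (max (pdd α) (pdd β)) (plen α + pdd β)
  | .union α β => max (pdd α) (pdd β)
end

/-- The path `↓[ψ₁]…↓[ψ_k]α`. -/
def prefixPath : List (NodeExpr A) → PathExpr A → PathExpr A
  | [], α => α
  | ψ :: l, α => .comp .down (.comp (.test ψ) (prefixPath l α))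

/-- The path `↓[ψ]α`. -/
def dPath (ψ : NodeExpr A) (α : PathExpr A) : PathExpr A :=
  .comp .down (.comp (.test ψ) α)

/-- A path expression whose leftmost symbol is `↓`. -/
def startsWithDown : PathExpr A → Prop
  | .down => True
  | .comp α _ => startsWithDown α
  | _ => False

/-- The subtree of `T` hanging from `x`, with the restricted partition. -/
def DataTree.restrict (T : DataTree A) (x : T.X) : DataTree A where
  X := {y : T.X // Relation.ReflTransGen T.child x y}
  child y z := T.child y.1 z.1
  root := ⟨x, Relation.ReflTransGen.refl⟩
  label y := T.label y.1
  eqd y z := T.eqd y.1 z.1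
  eqd_equiv :=
    ⟨fun y => T.eqd_equiv.refl y.1, fun h => T.eqd_equiv.symm h,
      fun h h' => T.eqd_equiv.trans h h'⟩
  parent_unique := by
    intro a b c hac hbc
    exact Subtype.ext (T.parent_unique hac hbc)
  root_no_parent := by
    intro y hy
    exact T.acyclic x (Relation.TransGen.tail' y.2 hy)
  reach := by
    rintro ⟨y, hy⟩
    induction hy with
    | refl => exact Relation.ReflTransGen.refl
    | @tail b c hxb hbc ih => exact Relation.ReflTransGen.tail (ih) hbc
  acyclic := by
    rintro y hy
    have key : ∀ a b, Relation.TransGen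
        (fun y z : {y : T.X // Relation.ReflTransGen T.child x y} => T.child y.1 z.1) a b →
        Relation.TransGen T.child a.1 b.1 := by
      intro a b h
      induction h with
      | single h => exact Relation.TransGen.single h
      | tail _ h ih => exact Relation.TransGen.tail ih h
    exact T.acyclic y.1 (key y y hy)

end XPath

/-!
Write `X := ⟨↓[ψ]α≠↓[ψ]α⟩` and `Y := ⟨↓[ψ]γ≠↓[ψ]γ⟩`; consistency of `X ∧ ¬Y` rules out a derivation
of `X ≤ Y`. At level `0`, `α = γ = ε` and `X ≤ Y` is trivial. Above it, the normal form `ψ` contains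
each of `⟨γ≠γ⟩` and `⟨α=γ⟩` positively or negatively, and both positive cases yield `X ≤ Y`:
* if `ψ ≤ ⟨γ≠γ⟩`, every `↓[ψ]`-child already reaches two different data values along `γ`;
* if `ψ ≤ ⟨α=γ⟩ ∧ ¬⟨α≠α⟩ ∧ ¬⟨γ≠γ⟩`, all endpoints of `α` and `γ` carry one datum, so
  `ψ ≤ ¬⟨γ≠α⟩ ∧ ⟨γ⟩`, and the axiom `⟨γ≠η[¬⟨α≠β⟩∧⟨α⟩]β⟩ ≤ ⟨γ≠ηα⟩` replaces `α` by `γ` on both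
  sides of `X`.

The Boolean reasoning on node expressions is derived from Huntington's axiom `ndAx1`.
-/

namespace XPath

variable {A : Type}

theorem conjuncts_subset_conjuncts_foldl (f : NodeExpr A → NodeExpr A) :
    ∀ (D : List (NodeExpr A)) (acc : NodeExpr A),
      conjuncts acc ⊆ conjuncts (D.foldl (fun acc d => .conj acc (f d)) acc)
  | [], _ => List.Subset.refl _
  | _ :: D, _ => fun _ hx =>
      conjuncts_subset_conjuncts_foldl f D _ (List.mem_append_left _ hx)

theorem conjuncts_subset_conjuncts_mkNF (a : A) (C : List (NodeExpr A)) {D : List (NodeExpr A)}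
    {δ : NodeExpr A} (hδ : δ ∈ D) :
    conjuncts (if δ ∈ C then δ else .neg δ) ⊆ conjuncts (mkNF a C D) := by
  unfold mkNF
  generalize NodeExpr.lab a = acc
  induction D generalizing acc with
  | nil => cases hδ
  | cons d D ih =>
    rcases List.mem_cons.1 hδ with rfl | hδ
    · exact fun _ hx => conjuncts_subset_conjuncts_foldl _ D _ (List.mem_append_right _ hx)
    · exact ih hδ _

variable [Fintype A]

def PLe (α β : PathExpr A) : Prop := PDer (.union α β) β

namespace PLe

theorem refl (α : PathExpr A) : PLe α α := PDer.isAx3 α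

theorem congr {α α' β β' : PathExpr A} (hα : PDer α α') (hβ : PDer β β') (h : PLe α β) :
    PLe α' β' :=
  ((PDer.congr_union hα.symm hβ.symm).trans h).trans hβ

theorem trans {α β γ : PathExpr A} (h₁ : PLe α β) (h₂ : PLe β γ) : PLe α γ :=
  (PDer.congr_union (PDer.refl α) h₂.symm).trans
    ((PDer.isAx1 α β γ).symm.trans ((PDer.congr_union h₁ (PDer.refl γ)).trans h₂))

theorem antisymm {α β : PathExpr A} (h₁ : PLe α β) (h₂ : PLe β α) : PDer α β :=
  h₂.symm.trans ((PDer.isAx2 β α).trans h₁)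

theorem comp {α α' β β' : PathExpr A} (hα : PLe α α') (hβ : PLe β β') :
    PLe (.comp α β) (.comp α' β') :=
  trans ((PDer.isAx6r α α' β).symm.trans (PDer.congr_comp hα (PDer.refl β)))
    ((PDer.isAx6l α' β β').symm.trans (PDer.congr_comp (PDer.refl α') hβ))

end PLe

theorem botP_pLe (α : PathExpr A) : PLe botP α := PDer.isAx7 α

def NLe (φ ψ : NodeExpr A) : Prop := NDer (nOr φ ψ) ψ

theorem nder_of_pDer_test {φ ψ : NodeExpr A} (h : PDer (.test φ) (.test ψ)) : NDer φ ψ :=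
  (NDer.ndAx2 φ).symm.trans ((NDer.congr_diam h).trans (NDer.ndAx2 ψ))

theorem nOr_congr {φ φ' ψ ψ' : NodeExpr A} (hφ : NDer φ φ') (hψ : NDer ψ ψ') :
    NDer (nOr φ ψ) (nOr φ' ψ') :=
  NDer.congr_neg (NDer.congr_conj (NDer.congr_neg hφ) (NDer.congr_neg hψ))

theorem nOr_comm (φ ψ : NodeExpr A) : NDer (nOr φ ψ) (nOr ψ φ) :=
  nder_of_pDer_test ((PDer.prAx3 φ ψ).trans ((PDer.isAx2 _ _).trans (PDer.prAx3 ψ φ).symm))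

theorem nOr_assoc (φ ψ χ : NodeExpr A) : NDer (nOr (nOr φ ψ) χ) (nOr φ (nOr ψ χ)) :=
  nder_of_pDer_test <| (PDer.prAx3 _ χ).trans <|
    (PDer.congr_union (PDer.prAx3 φ ψ) (PDer.refl _)).trans <|
    (PDer.isAx1 _ _ _).trans <|
    (PDer.congr_union (PDer.refl _) (PDer.prAx3 ψ χ).symm).trans (PDer.prAx3 φ _).symm

theorem nOr_self (φ : NodeExpr A) : NDer (nOr φ φ) φ :=
  nder_of_pDer_test ((PDer.prAx3 φ φ).trans (PDer.isAx3 _))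

namespace NLe

theorem refl (φ : NodeExpr A) : NLe φ φ := nOr_self φ

theorem congr {φ φ' ψ ψ' : NodeExpr A} (hφ : NDer φ φ') (hψ : NDer ψ ψ') (h : NLe φ ψ) :
    NLe φ' ψ' :=
  ((nOr_congr hφ.symm hψ.symm).trans h).trans hψ

theorem of_nder {φ ψ : NodeExpr A} (h : NDer φ ψ) : NLe φ ψ :=
  (nOr_congr h (NDer.refl ψ)).trans (nOr_self ψ)

theorem trans {φ ψ χ : NodeExpr A} (h₁ : NLe φ ψ) (h₂ : NLe ψ χ) : NLe φ χ :=
  (nOr_congr (NDer.refl φ) h₂.symm).trans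
    ((nOr_assoc φ ψ χ).symm.trans ((nOr_congr h₁ (NDer.refl χ)).trans h₂))

theorem antisymm {φ ψ : NodeExpr A} (h₁ : NLe φ ψ) (h₂ : NLe ψ φ) : NDer φ ψ :=
  h₂.symm.trans ((nOr_comm ψ φ).trans h₁)

theorem nOr {φ ψ χ : NodeExpr A} (h₁ : NLe φ χ) (h₂ : NLe ψ χ) : NLe (nOr φ ψ) χ :=
  (nOr_assoc φ ψ χ).trans ((nOr_congr (NDer.refl φ) h₂).trans h₁)

end NLe

theorem nle_nOr_left (φ ψ : NodeExpr A) : NLe φ (nOr φ ψ) :=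
  (nOr_assoc φ φ ψ).symm.trans (nOr_congr (nOr_self φ) (NDer.refl ψ))

theorem nle_nOr_right (φ ψ : NodeExpr A) : NLe ψ (nOr φ ψ) :=
  (nle_nOr_left ψ φ).congr (NDer.refl ψ) (nOr_comm ψ φ)

theorem botN_nle (φ : NodeExpr A) : NLe botN φ :=
  nder_of_pDer_test ((PDer.prAx3 botN φ).trans (PDer.isAx7 _))

theorem NLe.nder_botN {φ : NodeExpr A} (h : NLe φ botN) : NDer φ botN :=
  h.antisymm (botN_nle φ)

theorem nle_of_nder_nOr {φ χ ψ : NodeExpr A} (h : NDer φ (nOr χ ψ)) : NLe χ φ :=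
  (nOr_congr (NDer.refl χ) h).trans
    ((nOr_assoc χ χ ψ).symm.trans ((nOr_congr (nOr_self χ) (NDer.refl ψ)).trans h.symm))

theorem neg_nOr_nle (φ ψ : NodeExpr A) : NLe (.neg (nOr (.neg φ) ψ)) φ :=
  nle_of_nder_nOr (NDer.ndAx1 φ ψ)

theorem neg_neg_nle (φ : NodeExpr A) : NLe (.neg (.neg φ)) φ :=
  nle_of_nder_nOr ((NDer.ndAx1 φ (.neg φ)).trans
    (nOr_congr (NDer.congr_neg (nOr_self _)) (NDer.refl _)))

theorem neg_neg (φ : NodeExpr A) : NDer (.neg (.neg φ)) φ := by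
  have h₃ : NLe (NodeExpr.neg (.neg (.neg φ))) (.neg φ) := neg_neg_nle (.neg φ)
  have hφ : NDer φ (nOr (.neg (nOr (.neg φ) (.neg (.neg φ)))) (.neg (.neg φ))) :=
    (NDer.ndAx1 φ (.neg (.neg φ))).trans
      (nOr_congr (NDer.refl _) (NDer.congr_neg ((nOr_comm _ _).trans h₃)))
  -- `¬¬¬φ ≤ ¬φ ∨ ¬¬φ` rewrites the Huntington term `¬(¬¬¬φ ∨ (¬φ ∨ ¬¬φ)) ≤ ¬¬φ`
  have hle : NLe (NodeExpr.neg (nOr (.neg φ) (.neg (.neg φ)))) (.neg (.neg φ)) :=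
    (neg_nOr_nle (.neg (.neg φ)) (nOr (.neg φ) (.neg (.neg φ)))).congr
      (NDer.congr_neg (h₃.trans (nle_nOr_left _ _))) (NDer.refl _)
  exact (neg_neg_nle φ).antisymm ((hle.nOr (NLe.refl _)).congr hφ.symm (NDer.refl _))

theorem NLe.neg {φ ψ : NodeExpr A} (h : NLe φ ψ) : NLe (.neg ψ) (.neg φ) :=
  nle_of_nder_nOr ((NDer.ndAx1 (.neg φ) ψ).trans
    (nOr_congr (NDer.congr_neg ((nOr_congr (neg_neg φ) (NDer.refl ψ)).trans h)) (NDer.refl _)))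

theorem nle_topN (φ : NodeExpr A) : NLe φ topN :=
  (botN_nle (.neg φ)).neg.congr (neg_neg φ) (neg_neg topN)

theorem nle_nOr_neg_self (φ ψ : NodeExpr A) : NLe φ (nOr ψ (.neg ψ)) := by
  have h₁ : NLe (NodeExpr.neg (nOr (.neg φ) ψ)) (.neg ψ) := (nle_nOr_right (.neg φ) ψ).neg
  have h₂ : NLe (NodeExpr.neg (nOr (.neg φ) (.neg ψ))) ψ :=
    (nle_nOr_right (.neg φ) (.neg ψ)).neg.congr (NDer.refl _) (neg_neg ψ)
  exact ((h₁.trans (nle_nOr_right _ _)).nOr (h₂.trans (nle_nOr_left _ _))).congr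
    (NDer.ndAx1 φ ψ).symm (NDer.refl _)

theorem nOr_neg_self (φ : NodeExpr A) : NDer (nOr φ (.neg φ)) topN :=
  (nle_topN _).antisymm (nle_nOr_neg_self topN φ)

theorem conj_nder_neg_nOr (φ ψ : NodeExpr A) :
    NDer (.conj φ ψ) (.neg (nOr (.neg φ) (.neg ψ))) :=
  ((neg_neg (NodeExpr.conj (.neg (.neg φ)) (.neg (.neg ψ)))).trans
    (NDer.congr_conj (neg_neg φ) (neg_neg ψ))).symm

theorem conj_neg_self (φ : NodeExpr A) : NDer (.conj φ (.neg φ)) botN :=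
  (conj_nder_neg_nOr φ (.neg φ)).trans <| NDer.congr_neg <|
    (nOr_congr (NDer.refl _) (neg_neg φ)).trans ((nOr_comm _ _).trans (nOr_neg_self φ))

theorem conj_comm (φ ψ : NodeExpr A) : NDer (.conj φ ψ) (.conj ψ φ) :=
  (conj_nder_neg_nOr φ ψ).trans
    ((NDer.congr_neg (nOr_comm _ _)).trans (conj_nder_neg_nOr ψ φ).symm)

theorem conj_nle_left (φ ψ : NodeExpr A) : NLe (.conj φ ψ) φ :=
  (neg_nOr_nle φ (.neg ψ)).congr (conj_nder_neg_nOr φ ψ).symm (NDer.refl φ)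

theorem conj_nle_right (φ ψ : NodeExpr A) : NLe (.conj φ ψ) ψ :=
  (conj_nle_left ψ φ).congr (conj_comm ψ φ) (NDer.refl ψ)

theorem NLe.conj {χ φ ψ : NodeExpr A} (h₁ : NLe χ φ) (h₂ : NLe χ ψ) : NLe χ (.conj φ ψ) :=
  (h₁.neg.nOr h₂.neg).neg.congr (neg_neg χ) (conj_nder_neg_nOr φ ψ).symm

theorem NLe.conj_neg_nder_botN {φ ψ : NodeExpr A} (h : NLe φ ψ) :
    NDer (.conj φ (.neg ψ)) botN :=
  NLe.nder_botN <| (((conj_nle_left φ (.neg ψ)).trans h).conj (conj_nle_right φ (.neg ψ))).trans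
    (.of_nder (conj_neg_self ψ))

theorem nder_nOr_conj_neg_conj (φ ψ : NodeExpr A) :
    NDer φ (nOr (.conj φ (.neg ψ)) (.conj φ ψ)) :=
  (NDer.ndAx1 φ ψ).trans (nOr_congr
    ((conj_nder_neg_nOr φ (.neg ψ)).trans
      (NDer.congr_neg (nOr_congr (NDer.refl _) (neg_neg ψ)))).symm
    (conj_nder_neg_nOr φ ψ).symm)

theorem nle_neg_of_conj_nle_botN {φ ψ : NodeExpr A} (h : NLe (.conj φ ψ) botN) :
    NLe φ (.neg ψ) := by
  have hφ : NDer φ (.conj φ (.neg ψ)) :=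
    (nder_nOr_conj_neg_conj φ ψ).trans <| (nOr_congr (NDer.refl _) h.nder_botN).trans <|
      (nOr_comm _ _).trans (botN_nle _)
  exact (conj_nle_right φ (.neg ψ)).congr hφ.symm (NDer.refl _)

theorem PLe.test {φ ψ : NodeExpr A} (h : NLe φ ψ) : PLe (.test φ) (.test ψ) :=
  (PDer.prAx3 φ ψ).symm.trans (PDer.congr_test h)

theorem test_pLe_eps (φ : NodeExpr A) : PLe (.test φ) .eps :=
  (PLe.test (nle_topN φ)).congr (PDer.refl _) PDer.prAx2

theorem eps_pDer_test_union_test_neg (φ : NodeExpr A) :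
    PDer .eps (.union (.test φ) (.test (.neg φ))) :=
  PDer.prAx2.symm.trans ((PDer.congr_test (nOr_neg_self φ).symm).trans (PDer.prAx3 φ (.neg φ)))

theorem test_comp_test_neg (φ : NodeExpr A) : PDer (.comp (.test φ) (.test (.neg φ))) botP := by
  have hφ : PDer (.test φ) (.comp .eps (.test (.neg (.diam (.test (.neg φ)))))) :=
    (PDer.congr_test ((neg_neg φ).symm.trans
      (NDer.congr_neg (NDer.ndAx2 (.neg φ)).symm))).trans (PDer.isAx5l _).symm
  exact (PDer.congr_comp hφ (PDer.refl _)).trans (PDer.prAx1 .eps (.test (.neg φ)))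

theorem test_pDer_test_comp_test {φ ψ : NodeExpr A} (h : NLe φ ψ) :
    PDer (.test φ) (.comp (.test φ) (.test ψ)) := by
  have hsplit : PDer (.test φ)
      (.union (.comp (.test φ) (.test ψ)) (.comp (.test φ) (.test (.neg ψ)))) :=
    (PDer.isAx5r _).symm.trans <|
      (PDer.congr_comp (PDer.refl _) (eps_pDer_test_union_test_neg ψ)).trans (PDer.isAx6l _ _ _)
  have hbot : PDer (.comp (.test φ) (.test (.neg ψ))) botP :=
    (((PLe.test h).comp (PLe.refl _)).trans
      ((PLe.refl _).congr (PDer.refl _) (test_comp_test_neg ψ))).antisymm (botP_pLe _)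
  exact hsplit.trans ((PDer.congr_union (PDer.refl _) hbot).trans
    ((PDer.isAx2 _ _).trans (PDer.isAx7 _)))

theorem PLe.diam {α β : PathExpr A} (h : PLe α β) : NLe (.diam α) (.diam β) :=
  (NDer.ndAx3 α β).symm.trans (NDer.congr_diam h)

theorem diam_comp_nle_diam (α β : PathExpr A) : NLe (.diam (.comp α β)) (.diam α) :=
  (NLe.of_nder (NDer.ndAx4 α β)).trans
    (((PLe.refl α).comp (test_pLe_eps _)).diam.congr (NDer.refl _)
      (NDer.congr_diam (PDer.isAx5r α)))

theorem dPath_pDer (ψ : NodeExpr A) (α : PathExpr A) :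
    PDer (dPath ψ α) (.comp (.comp .down (.test ψ)) α) :=
  PDer.isAx4 _ _ _

theorem dPath_pDer_of_nle {ψ θ : NodeExpr A} (h : NLe ψ θ) (α : PathExpr A) :
    PDer (dPath ψ α) (.comp (.comp .down (.test ψ)) (.comp (.test θ) α)) :=
  (PDer.congr_comp (PDer.refl _)
    ((PDer.congr_comp (test_pDer_test_comp_test h) (PDer.refl α)).trans
      (PDer.isAx4 _ _ _).symm)).trans (PDer.isAx4 _ _ _)

theorem neqTest_dPath_self_nle_of_nle_neqTest {ψ : NodeExpr A} {α γ : PathExpr A}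
    (h : NLe ψ (.neqTest γ γ)) :
    NLe (.neqTest (dPath ψ α) (dPath ψ α)) (.neqTest (dPath ψ γ) (dPath ψ γ)) := by
  set down_ψ : PathExpr A := .comp .down (.test ψ)
  have hX : NLe (.neqTest (dPath ψ α) (dPath ψ α)) (.diam down_ψ) :=
    NLe.trans (NDer.neqAx4 _ _)
      ((diam_comp_nle_diam down_ψ α).congr (NDer.congr_diam (dPath_pDer ψ α)).symm (NDer.refl _))
  have hdown : PDer down_ψ (.comp down_ψ (.test (.neqTest γ γ))) :=
    (PDer.congr_comp (PDer.refl _) (test_pDer_test_comp_test h)).trans (PDer.isAx4 _ _ _)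
  exact hX.trans <| NLe.congr (NDer.congr_diam hdown).symm
    (NDer.congr_neqTest (dPath_pDer ψ γ).symm (dPath_pDer ψ γ).symm) (NDer.neqAx5 down_ψ γ γ)

theorem neqTest_dPath_nle_of_nle {ψ : NodeExpr A} {α γ : PathExpr A}
    (h : NLe ψ (.conj (.neg (.neqTest γ α)) (.diam γ))) (β : PathExpr A) :
    NLe (.neqTest β (dPath ψ α)) (.neqTest β (dPath ψ γ)) :=
  NLe.congr (NDer.congr_neqTest (PDer.refl β) (dPath_pDer_of_nle h α)).symm
    (NDer.congr_neqTest (PDer.refl β) (dPath_pDer ψ γ).symm)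
    (NDer.neqAx9 γ α β (.comp .down (.test ψ)))

theorem nle_neg_neqTest_of_nle_eqTest {ψ : NodeExpr A} {α γ : PathExpr A}
    (hα : NLe ψ (.neg (.neqTest α α))) (hγ : NLe ψ (.neg (.neqTest γ γ)))
    (hαγ : NLe ψ (.eqTest α γ)) : NLe ψ (.neg (.neqTest α γ)) := by
  set ω : NodeExpr A := nOr (.neqTest α α) (.neqTest γ γ)
  have hω : NLe (.conj ψ (.neqTest α γ)) ω :=
    ((conj_nle_right _ _).conj ((conj_nle_left _ _).trans hαγ)).trans (NDer.neqAx7 α α γ γ)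
  have hnω : NLe ψ (.neg ω) :=
    (hα.conj hγ).trans (.of_nder ((conj_nder_neg_nOr _ _).trans
      (NDer.congr_neg (nOr_congr (neg_neg _) (neg_neg _)))))
  exact nle_neg_of_conj_nle_botN
    ((hω.conj ((conj_nle_left _ _).trans hnω)).trans (.of_nder (conj_neg_self ω)))

theorem neqTest_dPath_self_nle_of_nle_eqTest {ψ : NodeExpr A} {α γ : PathExpr A}
    (hα : NLe ψ (.neg (.neqTest α α))) (hγ : NLe ψ (.neg (.neqTest γ γ)))
    (hαγ : NLe ψ (.eqTest α γ)) :
    NLe (.neqTest (dPath ψ α) (dPath ψ α)) (.neqTest (dPath ψ γ) (dPath ψ γ)) := by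
  have hθ : NLe ψ (.conj (.neg (.neqTest γ α)) (.diam γ)) :=
    ((nle_neg_neqTest_of_nle_eqTest hα hγ hαγ).trans
      (.of_nder (NDer.congr_neg (NDer.neqAx1 α γ)))).conj
      (hαγ.trans ((NLe.of_nder (NDer.eqAx1 α γ)).trans (NDer.eqAx4 γ α)))
  exact ((neqTest_dPath_nle_of_nle hθ _).trans (.of_nder (NDer.neqAx1 _ _))).trans
    (neqTest_dPath_nle_of_nle hθ _)

theorem nle_of_isConjunct : ∀ {ψ δ : NodeExpr A}, IsConjunct δ ψ → NLe ψ δ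
  | .conj φ χ, _, h => (List.mem_append.1 h).elim
      (fun h => (conj_nle_left φ χ).trans (nle_of_isConjunct h))
      (fun h => (conj_nle_right φ χ).trans (nle_of_isConjunct h))
  | .lab _, _, h | .neg _, _, h | .diam _, _, h | .eqTest _ _, _, h | .neqTest _ _, _, h => by
      rw [List.mem_singleton.1 h]
      exact NLe.refl _

theorem eq_eps_of_mem_Pnf_zero {α : PathExpr A} (h : α ∈ Pnf A 0) : α = .eps := by
  simpa [Pnf, NF] using h

theorem exists_mkNF_of_mem_Nnf_succ {n : ℕ} {ψ : NodeExpr A} (hψ : ψ ∈ Nnf A (n + 1)) :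
    ∃ (a : A) (C D : List (NodeExpr A)), ψ = mkNF a C D ∧ ∀ δ ∈ Dnf A (n + 1), δ ∈ D := by
  dsimp only [Nnf, NF, Set.mem_ofPred_eq] at hψ
  simp only [List.mem_filter, List.mem_flatMap, List.mem_map] at hψ
  obtain ⟨⟨C, -, a, -, rfl⟩, -⟩ := hψ
  refine ⟨a, C, _, rfl, ?_⟩
  rintro δ ⟨α, hα, β, hβ, rfl | rfl⟩
  · exact List.mem_append_left _ (List.mem_flatMap.2 ⟨α, hα, List.mem_map.2 ⟨β, hβ, rfl⟩⟩)
  · exact List.mem_append_right _ (List.mem_flatMap.2 ⟨α, hα, List.mem_map.2 ⟨β, hβ, rfl⟩⟩)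

theorem isConjunct_or_isConjunct_neg_of_mem_Nnf_succ {n : ℕ} {ψ δ : NodeExpr A}
    (hψ : ψ ∈ Nnf A (n + 1)) (hδ : δ ∈ Dnf A (n + 1)) :
    IsConjunct δ ψ ∨ IsConjunct (.neg δ) ψ := by
  obtain ⟨a, C, D, rfl, hD⟩ := exists_mkNF_of_mem_Nnf_succ hψ
  have hsub := conjuncts_subset_conjuncts_mkNF a C (hD δ hδ)
  have hδδ : δ ∈ conjuncts δ := by
    obtain ⟨α, -, β, -, rfl | rfl⟩ := hδ <;> exact List.mem_singleton_self _
  by_cases hC : δ ∈ C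
  · rw [if_pos hC] at hsub
    exact .inl (hsub hδδ)
  · rw [if_neg hC] at hsub
    exact .inr (hsub (List.mem_singleton_self _))

end XPath

/-- If `⟨↓[ψ]α ≠ ↓[ψ]α⟩ ∧ ¬⟨↓[ψ]γ ≠ ↓[ψ]γ⟩` is `XP`-consistent and `¬⟨α ≠ α⟩`
is a conjunct of `ψ`, then `¬⟨α = γ⟩` is a conjunct of `ψ`. -/
theorem XPath.paraverif {A : Type} [Fintype A] (hA : 1 < Fintype.card A)
    (n : ℕ) (ψ : NodeExpr A) (hψ : ψ ∈ Nnf A n)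
    (α γ : PathExpr A) (hα : α ∈ Pnf A n) (hγ : γ ∈ Pnf A n)
    (hcons : NConsistent (NodeExpr.conj (.neqTest (dPath ψ α) (dPath ψ α))
      (.neg (.neqTest (dPath ψ γ) (dPath ψ γ)))))
    (hconj : IsConjunct (.neg (.neqTest α α)) ψ) :
    IsConjunct (.neg (.eqTest α γ)) ψ := by
  have hXY : ¬ NLe (.neqTest (dPath ψ α) (dPath ψ α)) (.neqTest (dPath ψ γ) (dPath ψ γ)) :=
    fun h => hcons h.conj_neg_nder_botN
  cases n with
  | zero =>
    obtain rfl := eq_eps_of_mem_Pnf_zero hα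
    obtain rfl := eq_eps_of_mem_Pnf_zero hγ
    exact absurd (NLe.refl _) hXY
  | succ n =>
    obtain hγγ | hγγ := isConjunct_or_isConjunct_neg_of_mem_Nnf_succ hψ ⟨γ, hγ, γ, hγ, .inr rfl⟩
    · exact absurd (neqTest_dPath_self_nle_of_nle_neqTest (nle_of_isConjunct hγγ)) hXY
    obtain hαγ | hαγ := isConjunct_or_isConjunct_neg_of_mem_Nnf_succ hψ ⟨α, hα, γ, hγ, .inl rfl⟩
    · exact absurd (neqTest_dPath_self_nle_of_nle_eqTest (nle_of_isConjunct hconj)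
        (nle_of_isConjunct hγγ) (nle_of_isConjunct hαγ)) hXY
    · exact hαγ
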